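/- arXiv:0810.2810 — 6 statements merged into one kernel-verified Lean document; each statement's English description precedes it below -/
import Mathlib

section
/- If A is a Noetherian integrally closed domain, M is a reflexive A-module (i.e., the natural biduality map M → Hom_A(Hom_A(M,A),A) is an isomorphism), N is a torsion-free A-module, and ψ: M → N is an A-module homomorphism such that the localization ψ_p : M_p → N_p is an isomorphism for every prime ideal p of A of height at most one, then ψ is an isomorphism. -/
/-!
Injectivity of `ψ` is read off at the generic point. For surjectivity, fix `n : N` and let
`I = {a | a • n ∈ range ψ}`; the hypothesis says that `I` lies in no prime of height at most one.
Pick `a₀ ≠ 0` in `I` with `ψ m₁ = a₀ • n`. For every `f : Dual A M` the ideal `I` multiplies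
`f m₁` into `(a₀)`, so `a₀ ∣ f m₁`: otherwise an associated prime `p = ((a₀) : z)` of `A ⧸ (a₀)`
would contain `I`, and in a Noetherian normal domain such a prime has height at most one (either
`z / a₀` stabilises `p`, hence is integral, or `p` is minimal over a principal ideal and Krull's
principal ideal theorem applies). Reflexivity of `M` then turns `a₀ ∣ f m₁` for all `f` into
`m₁ = a₀ • m₀`, and `ψ m₀ = n` because `N` is torsion-free.
-/

open Function

section Localization

variable {A M N : Type*} [CommRing A] [AddCommGroup M] [Module A M] [AddCommGroup N] [Module A N]

theorem injective_of_localizedModule_map_injective [Module.IsTorsionFree A M] {S : Submonoid A}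
    (hS : S ≤ nonZeroDivisors A) (f : M →ₗ[A] N) (hf : Injective (LocalizedModule.map S f)) :
    Injective f := by
  have hmk : Injective (LocalizedModule.mkLinearMap S M) :=
    (IsLocalizedModule.injective_iff_isRegular S _).mpr fun c =>
      Module.IsTorsionFree.isSMulRegular (isRegular_iff_mem_nonZeroDivisors.mpr (hS c.2))
  have hcomm : LocalizedModule.mkLinearMap S N ∘ f =
      LocalizedModule.map S f ∘ LocalizedModule.mkLinearMap S M :=
    funext fun m => (LocalizedModule.map_mk S f m 1).symm
  exact Injective.of_comp (hcomm ▸ hf.comp hmk)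

theorem exists_smul_mem_range_of_localizedModule_map_surjective {S : Submonoid A}
    (f : M →ₗ[A] N) (hf : Surjective (LocalizedModule.map S f)) (n : N) :
    ∃ s ∈ S, s • n ∈ LinearMap.range f := by
  obtain ⟨x, hx⟩ := hf (LocalizedModule.mk n 1)
  induction x using LocalizedModule.induction_on with
  | h m s =>
    rw [LocalizedModule.map_mk, LocalizedModule.mk_eq] at hx
    obtain ⟨c, hc⟩ := hx
    refine ⟨c * s, (c * s).2, c • m, ?_⟩
    simpa [Submonoid.smul_def, mul_smul] using hc

end Localization

section NormalDomain

variable {A : Type*} [CommRing A]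

theorem IsIntegrallyClosed.dvd_of_forall_mem_exists_mul_eq [IsDomain A] [IsIntegrallyClosed A]
    {I : Ideal A} (hI : I.FG) (hI0 : I ≠ ⊥) {y z : A} (hy : y ≠ 0)
    (h : ∀ a ∈ I, ∃ c ∈ I, a * z = y * c) : y ∣ z := by
  let K := FractionRing A
  have hinj : Injective (algebraMap A K) := IsFractionRing.injective A K
  have hy' : algebraMap A K y ≠ 0 := (map_ne_zero_iff _ hinj).mpr hy
  let IK : Submodule A K := Submodule.map (Algebra.linearMap A K) I
  have hIK : IK ≠ ⊥ := by
    simpa [IK] using (Submodule.map_injective_of_injective (f := Algebra.linearMap A K) hinj).ne hI0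
  have hstable : ∀ n ∈ IK, (algebraMap A K z / algebraMap A K y) • n ∈ IK := by
    rintro _ ⟨a, ha, rfl⟩
    obtain ⟨c, hc, hac⟩ := h a ha
    refine ⟨c, hc, ?_⟩
    simp only [Algebra.linearMap_apply, smul_eq_mul]
    rw [div_mul_eq_mul_div, eq_div_iff hy', ← map_mul, ← map_mul, mul_comm z, hac, mul_comm]
  obtain ⟨x, hx⟩ := IsIntegrallyClosed.isIntegral_iff.mp
    (isIntegral_of_smul_mem_submodule IK hIK (Submodule.FG.map _ hI) _ hstable)
  refine ⟨x, hinj ?_⟩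
  rw [map_mul, hx, mul_div_cancel₀ _ hy']

theorem mem_minimalPrimes_span_singleton_of_forall_dvd_mul {p : Ideal A} [p.IsPrime] {a c : A}
    (ha : a ∈ p) (hc : c ∉ p) (h : ∀ b ∈ p, a ∣ b * c) : p ∈ (Ideal.span {a}).minimalPrimes := by
  refine ⟨⟨‹_›, (Ideal.span_singleton_le_iff_mem p).mpr ha⟩, fun q ⟨hq, haq⟩ hqp b hb => ?_⟩
  have hbc : b * c ∈ q := Ideal.mem_of_dvd _ (h b hb) ((Ideal.span_singleton_le_iff_mem q).mp haq)
  exact (hq.mem_or_mem hbc).resolve_right fun hcq => hc (hqp hcq)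

theorem Ideal.height_le_one_of_forall_mem_iff_dvd_mul [IsDomain A] [IsNoetherianRing A]
    [IsIntegrallyClosed A] {p : Ideal A} [hp : p.IsPrime] {y z : A} (hy : y ≠ 0)
    (hpz : ∀ r, r ∈ p ↔ y ∣ r * z) : p.height ≤ 1 := by
  by_cases hstable : ∀ a ∈ p, ∃ c ∈ p, a * z = y * c
  · have hyp : y ∈ p := (hpz y).mpr (dvd_mul_right y z)
    have hyz : y ∣ z := IsIntegrallyClosed.dvd_of_forall_mem_exists_mul_eq
      (IsNoetherian.noetherian p) (Submodule.ne_bot_iff p |>.mpr ⟨y, hyp, hy⟩) hy hstable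
    exact absurd ((hpz 1).mpr (by simpa using hyz)) hp.one_notMem
  · push Not at hstable
    obtain ⟨a, ha, hac⟩ := hstable
    obtain ⟨c, hc⟩ := (hpz a).mp ha
    refine Ideal.height_le_one_of_isPrincipal_of_mem_minimalPrimes (Ideal.span {a}) p
      (mem_minimalPrimes_span_singleton_of_forall_dvd_mul ha (fun h => hac c h hc) fun b hb => ?_)
    obtain ⟨d, hd⟩ := (hpz b).mp hb
    refine ⟨d, mul_left_cancel₀ hy ?_⟩
    calc y * (b * c) = b * (a * z) := by rw [hc]; ring
      _ = y * (a * d) := by rw [mul_left_comm, hd, mul_left_comm]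

theorem dvd_of_forall_height_le_one_not_le [IsDomain A] [IsNoetherianRing A]
    [IsIntegrallyClosed A] {I : Ideal A} {x y : A} (hy : y ≠ 0)
    (hI : ∀ p : Ideal A, p.IsPrime → p.height ≤ 1 → ¬ I ≤ p) (hIx : ∀ a ∈ I, y ∣ a * x) :
    y ∣ x := by
  have hmem (z r : A) :
      r ∈ (⊥ : Submodule A (A ⧸ Ideal.span {y})).colon {Ideal.Quotient.mk _ z} ↔ y ∣ r * z := by
    rw [Submodule.mem_colon_singleton, Submodule.mem_bot, Algebra.smul_def,
      Ideal.Quotient.algebraMap_eq, ← map_mul, Ideal.Quotient.eq_zero_iff_mem,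
      Ideal.mem_span_singleton]
  by_contra hx
  obtain ⟨p, hp, hle⟩ := exists_le_isAssociatedPrime_of_isNoetherianRing A
    (Ideal.Quotient.mk (Ideal.span {y}) x)
    (by rwa [Ne, Ideal.Quotient.eq_zero_iff_mem, Ideal.mem_span_singleton])
  obtain ⟨hprime, z, rfl⟩ := isAssociatedPrime_iff.mp hp
  obtain ⟨z, rfl⟩ := Ideal.Quotient.mk_surjective z
  exact hI _ hprime (Ideal.height_le_one_of_forall_mem_iff_dvd_mul hy (hmem z))
    fun a ha => hle ((hmem x a).mpr (hIx a ha))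

end NormalDomain

theorem Module.IsReflexive.exists_smul_eq_of_forall_dvd {A M : Type*} [CommRing A] [IsDomain A]
    [AddCommGroup M] [Module A M] [Module.IsReflexive A M] {a : A} (ha : a ≠ 0) {m : M}
    (h : ∀ f : Module.Dual A M, a ∣ f m) : ∃ m₀, a • m₀ = m := by
  let φ : Module.Dual A (Module.Dual A M) :=
    (LinearEquiv.toSpanNonzeroSingleton A A a ha).symm.toLinearMap ∘ₗ
      (Module.Dual.eval A M m).codRestrict (A ∙ a) fun f => Ideal.mem_span_singleton.mpr (h f)
  obtain ⟨m₀, hm₀⟩ := (Module.bijective_dual_eval A M).surjective φ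
  refine ⟨m₀, (Module.bijective_dual_eval A M).injective (LinearMap.ext fun f => ?_)⟩
  calc f (a • m₀) = φ f • a := by rw [map_smul, ← hm₀, smul_eq_mul, smul_eq_mul, mul_comm]; rfl
    _ = f m := LinearEquiv.toSpanNonzeroSingleton_symm_apply_smul A A a ha _

/-- Auslander–Buchsbaum: if `A` is a Noetherian integrally closed domain, `M` a reflexive
`A`-module, `N` a torsion-free `A`-module, and `ψ : M → N` localizes to an isomorphism at
every prime of height at most one, then `ψ` is an isomorphism. -/
theorem reflexive_map_bijective_of_localization_bijective
    {A : Type*} [CommRing A] [IsDomain A] [IsNoetherianRing A] [IsIntegrallyClosed A]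
    {M N : Type*} [AddCommGroup M] [Module A M] [AddCommGroup N] [Module A N]
    [Module.IsReflexive A M] [NoZeroSMulDivisors A N]
    (ψ : M →ₗ[A] N)
    (hloc : ∀ (p : Ideal A) [p.IsPrime],
      Order.height (⟨p, ‹_›⟩ : PrimeSpectrum A) ≤ 1 →
      Function.Bijective (LocalizedModule.map p.primeCompl ψ)) :
    Function.Bijective ψ := by
  have hloc' (p : Ideal A) (hp : p.IsPrime) (hh : p.height ≤ 1) :
      Bijective (LocalizedModule.map p.primeCompl ψ) :=
    hloc p (by rwa [← PrimeSpectrum.height_eq_orderHeight])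
  have hbot : (⊥ : Ideal A).height ≤ 1 := by simp [Ideal.height_bot]
  have hinj : Injective ψ := injective_of_localizedModule_map_injective
    (Ideal.primeCompl_le_nonZeroDivisors ⊥) ψ (hloc' ⊥ Ideal.isPrime_bot hbot).injective
  refine ⟨hinj, fun n => ?_⟩
  let I := (LinearMap.range ψ).colon {n}
  have hI (p : Ideal A) (hp : p.IsPrime) (hh : p.height ≤ 1) : ¬ I ≤ p := fun hle => by
    obtain ⟨s, hs, hsn⟩ :=
      exists_smul_mem_range_of_localizedModule_map_surjective ψ (hloc' p hp hh).surjective n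
    exact hs (hle (Submodule.mem_colon_singleton.mpr hsn))
  obtain ⟨a₀, ha₀I, ha₀⟩ : ∃ a₀ ∈ I, a₀ ≠ 0 := by
    simpa [SetLike.le_def] using hI ⊥ Ideal.isPrime_bot hbot
  obtain ⟨m₁, hm₁⟩ := Submodule.mem_colon_singleton.mp ha₀I
  have hdvd (f : Module.Dual A M) : a₀ ∣ f m₁ := by
    refine dvd_of_forall_height_le_one_not_le ha₀ hI fun a ha => ?_
    obtain ⟨m, hm⟩ := Submodule.mem_colon_singleton.mp ha
    have hm₁m : a • m₁ = a₀ • m := hinj (by rw [map_smul, map_smul, hm₁, hm, smul_comm])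
    exact ⟨f m, by rw [← smul_eq_mul, ← map_smul, hm₁m, map_smul, smul_eq_mul]⟩
  obtain ⟨m₀, rfl⟩ := Module.IsReflexive.exists_smul_eq_of_forall_dvd ha₀ hdvd
  exact ⟨m₀, smul_right_injective N ha₀ ((map_smul ψ a₀ m₀).symm.trans hm₁)⟩
end

section
/- Let φ: A → B be a ring homomorphism between integral domains with kernel q. If M is a finitely generated A-module such that the localization M_q is a free A_q-module of rank r, then M ⊗_A B is a finitely generated B-module of rank r, i.e., (M ⊗_A B) ⊗_B L ≅ L^r where L is the fraction field of B. -/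
open TensorProduct

/-!
Since `q` is the kernel of `A → B`, every element of `A \ q` becomes a unit in the fraction
field `L` of `B`, so `A → L` factors through `A_q`. Hence `L ⊗_B (B ⊗_A M) ≅ L ⊗_A M
≅ L ⊗_{A_q} M_q`, and a basis of the free module `M_q` base changes to a basis of the latter.
-/

lemma isUnit_algebraMap_of_ker_le {A B K : Type*} [CommRing A] [CommRing B] [IsDomain B]
    [Algebra A B] [CommRing K] [Algebra B K] [IsFractionRing B K] [Algebra A K]
    [IsScalarTower A B K] {q : Ideal A} [q.IsPrime] (h : RingHom.ker (algebraMap A B) ≤ q)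
    (s : q.primeCompl) : IsUnit (algebraMap A K s) := by
  have hs : algebraMap A B s ≠ 0 := fun hs => s.2 (h (RingHom.mem_ker.mpr hs))
  rw [IsScalarTower.algebraMap_apply A B K]
  exact IsLocalization.map_units K (⟨_, mem_nonZeroDivisors_of_ne_zero hs⟩ : nonZeroDivisors B)

noncomputable def Module.Basis.tensorOfIsLocalizedModule {A Aₛ K M Mₛ ι : Type*} [CommRing A]
    [CommRing Aₛ] [Algebra A Aₛ] [CommRing K] [Algebra A K] [Algebra Aₛ K]
    [IsScalarTower A Aₛ K] (S : Submonoid A) [IsLocalization S Aₛ] [AddCommGroup M] [Module A M]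
    [AddCommGroup Mₛ] [Module A Mₛ] [Module Aₛ Mₛ] [IsScalarTower A Aₛ Mₛ] (f : M →ₗ[A] Mₛ)
    [IsLocalizedModule S f] (b : Module.Basis ι Aₛ Mₛ) : Module.Basis ι K (K ⊗[A] M) :=
  ((b.map (IsLocalizedModule.isBaseChange S Aₛ f).equiv.symm).baseChange K).map
    (AlgebraTensorModule.cancelBaseChange A Aₛ K K M)

theorem rank_baseChange_of_localization_free_general
    {A B : Type*} [CommRing A] [CommRing B] [IsDomain B] [Algebra A B]
    {M : Type*} [AddCommGroup M] [Module A M] [Module.Finite A M]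
    (q : Ideal A) [q.IsPrime] (hq : q = RingHom.ker (algebraMap A B)) (r : ℕ)
    (hfree : Module.Free (Localization.AtPrime q) (LocalizedModule q.primeCompl M))
    (hrank : Module.finrank (Localization.AtPrime q) (LocalizedModule q.primeCompl M) = r) :
    Module.Finite B (TensorProduct A B M) ∧
      Nonempty ((TensorProduct B (FractionRing B) (TensorProduct A B M))
        ≃ₗ[FractionRing B] (Fin r → FractionRing B)) := by
  let L := FractionRing B
  let Aq := Localization.AtPrime q
  have hunit : ∀ s : q.primeCompl, IsUnit (algebraMap A L s) :=
    isUnit_algebraMap_of_ker_le hq.ge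
  let : Algebra Aq L := (IsLocalization.lift hunit).toAlgebra
  have : IsScalarTower A Aq L :=
    IsScalarTower.of_algebraMap_eq' (IsLocalization.lift_comp hunit).symm
  have : Module.Finite Aq (LocalizedModule q.primeCompl M) :=
    Module.Finite.of_isLocalizedModule q.primeCompl (LocalizedModule.mkLinearMap q.primeCompl M)
  let b : Module.Basis (Fin r) Aq (LocalizedModule q.primeCompl M) :=
    (Module.finBasis Aq _).reindex (finCongr hrank)
  let bL : Module.Basis (Fin r) L (L ⊗[A] M) :=
    b.tensorOfIsLocalizedModule q.primeCompl (LocalizedModule.mkLinearMap q.primeCompl M)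
  exact ⟨inferInstance, ⟨AlgebraTensorModule.cancelBaseChange A B L L M ≪≫ₗ bL.equivFun⟩⟩

/-- If `φ : A → B` is a ring homomorphism of integral domains with kernel `q`, and `M` is a
finitely generated `A`-module such that `M_q` is free of rank `r` over `A_q`, then `M ⊗_A B`
is a `B`-module of rank `r`, i.e. `(M ⊗_A B) ⊗_B L ≅ L^r` where `L` is the fraction field
of `B`. -/
theorem rank_baseChange_of_localization_free
    {A B : Type*} [CommRing A] [IsDomain A] [CommRing B] [IsDomain B] [Algebra A B]
    {M : Type*} [AddCommGroup M] [Module A M] [Module.Finite A M]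
    (q : Ideal A) [q.IsPrime] (hq : q = RingHom.ker (algebraMap A B)) (r : ℕ)
    (hfree : Module.Free (Localization.AtPrime q) (LocalizedModule q.primeCompl M))
    (hrank : Module.finrank (Localization.AtPrime q) (LocalizedModule q.primeCompl M) = r) :
    Module.Finite B (TensorProduct A B M) ∧
      Nonempty ((TensorProduct B (FractionRing B) (TensorProduct A B M))
        ≃ₗ[FractionRing B] (Fin r → FractionRing B)) :=
  rank_baseChange_of_localization_free_general q hq r hfree hrank
end

section
/- Let (A, m) be a Noetherian local domain and I_1, I_2, ... nonzero ideals of A. Set P = ∏_n A/I_n and S = ⊕_n A/I_n. Then the short exact sequence 0 → S → P → P/S → 0 is pure exact: for every A-module L, the map S ⊗_A L → P ⊗_A L is injective. -/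
/-!
The direct sum is the union of the finite partial products, and on each of these the projection
`x ↦ (x₀, …, x_{N-1}, 0, 0, …)` is a retraction of the product onto the direct sum. Every tensor in
`S ⊗ L` only involves finitely many elements of `S`, so it is fixed by the tensored retraction for a
single large `N`; hence it cannot be killed by `S ⊗ L → P ⊗ L`.
-/

open Filter TensorProduct

namespace LinearMap

section Retraction

variable {R M P : Type*} [CommSemiring R] [AddCommMonoid M] [Module R M]
  [AddCommMonoid P] [Module R P]

theorem eventually_rTensor_comp_apply_eq {ι : Type*} {l : Filter ι} {f : M →ₗ[R] P}
    {r : ι → P →ₗ[R] M} (h : ∀ m, ∀ᶠ i in l, r i (f m) = m)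
    (L : Type*) [AddCommMonoid L] [Module R L] (t : M ⊗[R] L) :
    ∀ᶠ i in l, ((r i).comp f).rTensor L t = t := by
  induction t using TensorProduct.induction_on with
  | zero => exact .of_forall fun _ => map_zero _
  | tmul m x => exact (h m).mono fun i hi => by rw [rTensor_tmul, comp_apply, hi]
  | add t t' ht ht' => exact (ht.and ht').mono fun i hi => by rw [map_add, hi.1, hi.2]

theorem rTensor_injective_of_eventually_leftInverse {ι : Type*} {l : Filter ι} [l.NeBot]
    {f : M →ₗ[R] P} {r : ι → P →ₗ[R] M} (h : ∀ m, ∀ᶠ i in l, r i (f m) = m)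
    (L : Type*) [AddCommMonoid L] [Module R L] :
    Function.Injective (f.rTensor L) := by
  intro t t' htt'
  obtain ⟨i, hi, hi'⟩ := ((eventually_rTensor_comp_apply_eq h L t).and
    (eventually_rTensor_comp_apply_eq h L t')).exists
  rw [← hi, ← hi', rTensor_comp, comp_apply, comp_apply, htt']

end Retraction

section Truncation

variable {R ι : Type*} [Semiring R] [DecidableEq ι] {M : ι → Type*}
  [∀ i, AddCommMonoid (M i)] [∀ i, Module R (M i)]

variable (R M) in
def piTruncate (s : Finset ι) : ((i : ι) → M i) →ₗ[R] ((i : ι) → M i) :=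
  ∑ i ∈ s, single R M i ∘ₗ proj i

theorem piTruncate_apply (s : Finset ι) (x : (i : ι) → M i) :
    piTruncate R M s x = ∑ i ∈ s, Pi.single i (x i) := by
  simp only [piTruncate, sum_apply, comp_apply, proj_apply, coe_single]

theorem piTruncate_apply_apply (s : Finset ι) (x : (i : ι) → M i) (j : ι) :
    piTruncate R M s x j = if j ∈ s then x j else 0 := by
  rw [piTruncate_apply, Finset.sum_apply, Finset.sum_pi_single]

theorem piTruncate_mem_iSup_range_single (s : Finset ι) (x : (i : ι) → M i) :
    piTruncate R M s x ∈ ⨆ i, range (single R M i) := by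
  rw [piTruncate_apply]
  exact Submodule.sum_mem _ fun i _ => Submodule.mem_iSup_of_mem i (mem_range_self _ (x i))

theorem eventually_piTruncate_eq {x : (i : ι) → M i} (hx : x ∈ ⨆ i, range (single R M i)) :
    ∀ᶠ s in atTop, piTruncate R M s x = x := by
  induction hx using Submodule.iSup_induction' with
  | mem i _ hx =>
    obtain ⟨a, rfl⟩ := hx
    filter_upwards [eventually_ge_atTop {i}] with s hs
    ext j
    rw [piTruncate_apply_apply]
    split_ifs with hj
    · rfl
    · rw [coe_single, Pi.single_eq_of_ne]
      rintro rfl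
      exact hj (hs (Finset.mem_singleton_self j))
  | zero => exact .of_forall fun _ => map_zero _
  | add x y _ _ hx hy => exact (hx.and hy).mono fun s hs => by rw [map_add, hs.1, hs.2]

end Truncation

end LinearMap

theorem directSum_pure_in_product_general
    {A : Type u} [CommRing A]
    (I : ℕ → Ideal A)
    (S : Submodule A ((n : ℕ) → A ⧸ I n))
    (hS : S = ⨆ n, LinearMap.range (LinearMap.single A (fun n => A ⧸ I n) n)) :
    ∀ (L : Type v) [AddCommGroup L] [Module A L],
      Function.Injective (LinearMap.rTensor L S.subtype) := by
  intro L _ _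
  subst hS
  let retraction (s : Finset ℕ) := (LinearMap.piTruncate A (fun n => A ⧸ I n) s).codRestrict _
    (LinearMap.piTruncate_mem_iSup_range_single s)
  refine LinearMap.rTensor_injective_of_eventually_leftInverse (l := atTop) (r := retraction)
    (fun x => ?_) L
  exact (LinearMap.eventually_piTruncate_eq x.2).mono fun _ hs => Subtype.ext hs

/-- Let `(A, m)` be a Noetherian local domain, `I₁, I₂, …` nonzero ideals, `P = ∏ₙ A/Iₙ`
and `S = ⊕ₙ A/Iₙ ⊆ P`.  Then `0 → S → P → P/S → 0` is pure exact: for every `A`-module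
`L`, the map `S ⊗_A L → P ⊗_A L` is injective. -/
theorem directSum_pure_in_product
    {A : Type u} [CommRing A] [IsDomain A] [IsNoetherianRing A] [IsLocalRing A]
    (I : ℕ → Ideal A) (hne : ∀ n, I n ≠ ⊥)
    (S : Submodule A ((n : ℕ) → A ⧸ I n))
    (hS : S = ⨆ n, LinearMap.range (LinearMap.single A (fun n => A ⧸ I n) n)) :
    ∀ (L : Type v) [AddCommGroup L] [Module A L],
      Function.Injective (LinearMap.rTensor L S.subtype) :=
  directSum_pure_in_product_general I S hS
end

section
/- Let (A, m) be a Noetherian local domain, I_1, I_2, ... nonzero ideals, P = ∏_n A/I_n, S = ⊕_n A/I_n. If M is a finitely generated A-module such that Hom_A(M, A/I_n) ≅ A/I_n as A-modules for all n, then Hom_A(M, P/S) ≅ P/S as A-modules. -/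
/-!
For finitely presented `M`, `Hom(M, -)` keeps `0 → S → P → P ⧸ S → 0` exact: lift
`Aᵏ → M → P ⧸ S` to `Aᵏ → P`; the finitely generated module of relations lands in finitely many
coordinates, and zeroing those coordinates gives a lift that factors through `M`. As `M` is
finitely generated, `Hom(M, -)` also commutes with the product and the direct sum, so
`Hom(M, P ⧸ S) ≅ Πₙ Hom(M, A ⧸ Iₙ) ⧸ ⨁ₙ Hom(M, A ⧸ Iₙ) ≅ P ⧸ S`.
-/

open LinearMap Submodule

section Semiring

variable (R : Type*) [Semiring R] {ι : Type*} [DecidableEq ι]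
  (N : ι → Type*) [∀ i, AddCommMonoid (N i)] [∀ i, Module R (N i)]

def directSumSubmodule : Submodule R (∀ i, N i) :=
  ⨆ i, range (single R N i)

variable {R N}

theorem mem_directSumSubmodule_iff {x : ∀ i, N i} :
    x ∈ directSumSubmodule R N ↔ {i | x i ≠ 0}.Finite := by
  have h_fin (s : Finset ι) : x ∈ ⨆ i ∈ s, range (single R N i) ↔ ∀ i ∉ s, x i = 0 := by
    rw [show ⨆ i ∈ s, range (single R N i) = _ from
      iSup_range_single_eq_iInf_ker_proj R N isCompl_compl s.finite_toSet]
    simp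
  rw [directSumSubmodule, mem_iSup_iff_exists_finset]
  simp_rw [h_fin]
  refine ⟨fun ⟨s, hs⟩ ↦ s.finite_toSet.subset fun i hi ↦ ?_, fun h ↦ ⟨h.toFinset, fun i hi ↦ ?_⟩⟩
  · by_contra his
    exact hi (hs i his)
  · simpa using hi

end Semiring

section Ring

variable {R : Type*} [Ring R] {ι : Type*} [DecidableEq ι]
  {N N' : ι → Type*} [∀ i, AddCommGroup (N i)] [∀ i, Module R (N i)]
  [∀ i, AddCommGroup (N' i)] [∀ i, Module R (N' i)]

theorem map_piCongrRight_directSumSubmodule (σ : ∀ i, N i ≃ₗ[R] N' i) :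
    (directSumSubmodule R N).map (LinearEquiv.piCongrRight σ).toLinearMap =
      directSumSubmodule R N' := by
  ext x
  simp [map_equiv_eq_comap_symm, mem_directSumSubmodule_iff]

noncomputable def quotientDirectSumCongr (σ : ∀ i, N i ≃ₗ[R] N' i) :
    ((∀ i, N i) ⧸ directSumSubmodule R N) ≃ₗ[R] (∀ i, N' i) ⧸ directSumSubmodule R N' :=
  Quotient.equiv _ _ _ (map_piCongrRight_directSumSubmodule σ)

end Ring

section CommRing

variable {R : Type*} [CommRing R] {ι : Type*} [DecidableEq ι]
  {N : ι → Type*} [∀ i, AddCommGroup (N i)] [∀ i, Module R (N i)]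
  {M : Type*} [AddCommGroup M] [Module R M]

theorem range_pi_le_directSumSubmodule_iff [Module.Finite R M] (v : ∀ i, M →ₗ[R] N i) :
    range (pi v) ≤ directSumSubmodule R N ↔ v ∈ directSumSubmodule R fun i ↦ M →ₗ[R] N i := by
  rw [mem_directSumSubmodule_iff]
  constructor
  · intro h
    obtain ⟨s, hs⟩ := Module.Finite.fg_top (R := R) (M := M)
    refine (s.finite_toSet.biUnion fun m _ ↦
      mem_directSumSubmodule_iff.1 (h (mem_range_self (pi v) m))).subset fun i hi ↦ ?_
    by_contra hvi
    simp only [Set.mem_iUnion, not_exists] at hvi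
    exact hi (ext_on hs fun m hm ↦ by simpa using hvi m hm)
  · rintro hv _ ⟨m, rfl⟩
    rw [mem_directSumSubmodule_iff]
    refine hv.subset fun i hi hvi ↦ hi ?_
    simp [hvi]

theorem exists_ker_le_of_map_le_directSumSubmodule {L : Type*} [AddCommGroup L] [Module R L]
    {K : Submodule R L} (hK : K.FG) (g : L →ₗ[R] ∀ i, N i)
    (hg : K.map g ≤ directSumSubmodule R N) :
    ∃ g₀ : L →ₗ[R] ∀ i, N i, K ≤ ker g₀ ∧
      (directSumSubmodule R N).mkQ ∘ₗ g₀ = (directSumSubmodule R N).mkQ ∘ₗ g := by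
  have : Module.Finite R K := Module.Finite.iff_fg.2 hK
  have hF : {i | proj i ∘ₗ g ∘ₗ K.subtype ≠ 0}.Finite := by
    rw [← mem_directSumSubmodule_iff (R := R), ← range_pi_le_directSumSubmodule_iff]
    simpa [range_comp] using hg
  set corr := ∑ i ∈ hF.toFinset, single R N i ∘ₗ proj i ∘ₗ g
  refine ⟨g - corr, fun k hk ↦ ?_, ?_⟩
  · ext i
    by_cases hi : i ∈ hF.toFinset
    · simp [corr, hi]
    · have hgi : proj i ∘ₗ g ∘ₗ K.subtype = 0 := by simpa using hi
      have hgk : g k i = 0 := by simpa using LinearMap.congr_fun hgi ⟨k, hk⟩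
      simp [corr, hgk, Finset.sum_apply]
  · ext x
    simp only [coe_comp, Function.comp_apply, mkQ_apply, LinearMap.sub_apply]
    refine (Submodule.Quotient.eq _).2 ?_
    rw [sub_sub_cancel_left, neg_mem_iff]
    simp only [corr, LinearMap.sum_apply]
    exact Submodule.sum_mem _ fun i _ ↦ mem_iSup_of_mem i (mem_range_self _ _)

theorem exists_mkQ_comp_eq_of_finitePresentation [Module.FinitePresentation R M]
    (f : M →ₗ[R] (∀ i, N i) ⧸ directSumSubmodule R N) :
    ∃ g : M →ₗ[R] ∀ i, N i, (directSumSubmodule R N).mkQ ∘ₗ g = f := by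
  obtain ⟨n, K, e, hK⟩ := Module.FinitePresentation.exists_fin R M
  obtain ⟨g', hg'⟩ := Module.projective_lifting_property (directSumSubmodule R N).mkQ
    (f ∘ₗ e.symm ∘ₗ K.mkQ) (directSumSubmodule R N).mkQ_surjective
  have hKS : K.map g' ≤ directSumSubmodule R N := by
    rw [map_le_iff_le_comap]
    intro k hk
    rw [mem_comap, ← Submodule.Quotient.mk_eq_zero, ← mkQ_apply, ← comp_apply, hg']
    simp [(Submodule.Quotient.mk_eq_zero K).2 hk]
  obtain ⟨g₀, hKg₀, hg₀⟩ := exists_ker_le_of_map_le_directSumSubmodule hK g' hKS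
  refine ⟨K.liftQ g₀ hKg₀ ∘ₗ e.toLinearMap, ?_⟩
  ext m
  obtain ⟨x, hx⟩ := K.mkQ_surjective (e m)
  have hm : e.symm (K.mkQ x) = m := by rw [hx, e.symm_apply_apply]
  simpa [← hx, ← hm] using congr($hg₀ x).trans congr($hg' x)

theorem map_ker_compRight_mkQ_directSumSubmodule [Module.Finite R M] :
    (ker (compRight R (directSumSubmodule R N).mkQ : (M →ₗ[R] ∀ i, N i) →ₗ[R] _)).map
      (LinearEquiv.linearMapPi R).symm.toLinearMap =
      directSumSubmodule R fun i ↦ M →ₗ[R] N i := by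
  ext v
  rw [map_equiv_eq_comap_symm, LinearEquiv.symm_symm, mem_comap, mem_ker, compRight_apply,
    ← range_le_ker_iff, ker_mkQ]
  exact range_pi_le_directSumSubmodule_iff v

noncomputable def linearMapQuotientDirectSumEquiv [Module.FinitePresentation R M] :
    (M →ₗ[R] (∀ i, N i) ⧸ directSumSubmodule R N) ≃ₗ[R]
      (∀ i, M →ₗ[R] N i) ⧸ directSumSubmodule R fun i ↦ M →ₗ[R] N i :=
  (quotKerEquivOfSurjective (compRight R (directSumSubmodule R N).mkQ)
      exists_mkQ_comp_eq_of_finitePresentation).symm ≪≫ₗ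
    Quotient.equiv _ _ _ map_ker_compRight_mkQ_directSumSubmodule

end CommRing

theorem hom_quotient_iso_of_hom_iso_general
    {A : Type u} [CommRing A] [IsNoetherianRing A]
    (I : ℕ → Ideal A)
    (S : Submodule A ((n : ℕ) → A ⧸ I n))
    (hS : S = ⨆ n, LinearMap.range (LinearMap.single A (fun n => A ⧸ I n) n))
    (M : Type u) [AddCommGroup M] [Module A M] [Module.Finite A M]
    (hhom : ∀ n, Nonempty ((M →ₗ[A] A ⧸ I n) ≃ₗ[A] A ⧸ I n)) :
    Nonempty ((M →ₗ[A] (((n : ℕ) → A ⧸ I n) ⧸ S)) ≃ₗ[A] (((n : ℕ) → A ⧸ I n) ⧸ S)) := by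
  subst hS
  have := Module.finitePresentation_of_finite A M
  exact ⟨linearMapQuotientDirectSumEquiv ≪≫ₗ quotientDirectSumCongr fun n ↦ (hhom n).some⟩

/-- Let `(A, m)` be a Noetherian local domain, `I₁, I₂, …` nonzero ideals, `P = ∏ₙ A/Iₙ`,
`S = ⊕ₙ A/Iₙ`.  If `M` is a finitely generated `A`-module with `Hom_A(M, A/Iₙ) ≅ A/Iₙ`
for all `n`, then `Hom_A(M, P/S) ≅ P/S`. -/
theorem hom_quotient_iso_of_hom_iso
    {A : Type u} [CommRing A] [IsDomain A] [IsNoetherianRing A] [IsLocalRing A]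
    (I : ℕ → Ideal A) (hne : ∀ n, I n ≠ ⊥)
    (S : Submodule A ((n : ℕ) → A ⧸ I n))
    (hS : S = ⨆ n, LinearMap.range (LinearMap.single A (fun n => A ⧸ I n) n))
    (M : Type u) [AddCommGroup M] [Module A M] [Module.Finite A M]
    (hhom : ∀ n, Nonempty ((M →ₗ[A] A ⧸ I n) ≃ₗ[A] A ⧸ I n)) :
    Nonempty ((M →ₗ[A] (((n : ℕ) → A ⧸ I n) ⧸ S)) ≃ₗ[A] (((n : ℕ) → A ⧸ I n) ⧸ S)) :=
  hom_quotient_iso_of_hom_iso_general I S hS M hhom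
end

section
/- Let (A, m) be a Noetherian local ring, M an A-module, and N ⊆ M a pure submodule. Then for every r ≥ 1, m^r M ∩ N = m^r N; that is, the m-adic topology on N coincides with the subspace topology induced from the m-adic topology on M. -/
open TensorProduct

/-!
Tensoring with `A ⧸ I` identifies `M ⊗ A ⧸ I` with `M ⧸ I M`, so `x ⊗ 1 = 0` exactly when
`x ∈ I M`. For `x ∈ I M ∩ N`, purity turns `x ⊗ 1 = 0` in `M ⊗ A ⧸ I` into `x ⊗ 1 = 0` in
`N ⊗ A ⧸ I`, i.e. `x ∈ I N`.
-/

namespace Submodule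

variable {R M : Type*} [CommRing R] [AddCommGroup M] [Module R M]

theorem tmul_one_eq_zero_iff_mem_smul_top (I : Ideal R) (x : M) :
    x ⊗ₜ[R] (1 : R ⧸ I) = 0 ↔ x ∈ I • (⊤ : Submodule R M) := by
  rw [← tensorQuotEquivQuotSMul_symm_mk, LinearEquiv.map_eq_zero_iff, Quotient.mk_eq_zero]

theorem smul_top_inf_eq_smul_of_rTensor_injective (I : Ideal R) (N : Submodule R M)
    (hN : Function.Injective (N.subtype.rTensor (R ⧸ I))) :
    I • ⊤ ⊓ N = I • N := by
  refine le_antisymm ?_ (le_inf (smul_mono_right I le_top) smul_le_right)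
  rintro x ⟨hxI, hxN⟩
  have hM : N.subtype.rTensor (R ⧸ I) ((⟨x, hxN⟩ : N) ⊗ₜ[R] (1 : R ⧸ I)) = 0 :=
    (tmul_one_eq_zero_iff_mem_smul_top I x).mpr hxI
  have hN0 : (⟨x, hxN⟩ : N) ⊗ₜ[R] (1 : R ⧸ I) = 0 := hN (hM.trans (map_zero _).symm)
  exact (mem_smul_top_iff I N _).mp ((tmul_one_eq_zero_iff_mem_smul_top I _).mp hN0)

end Submodule

theorem smul_top_inf_eq_smul_of_pure_general
    {A : Type u} [CommRing A] [IsLocalRing A]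
    {M : Type u} [AddCommGroup M] [Module A M] (N : Submodule A M)
    (hpure : ∀ (L : Type u) [AddCommGroup L] [Module A L],
      Function.Injective (LinearMap.rTensor L N.subtype)) :
    ∀ r : ℕ, 1 ≤ r →
      (IsLocalRing.maximalIdeal A ^ r • (⊤ : Submodule A M)) ⊓ N
        = IsLocalRing.maximalIdeal A ^ r • N :=
  fun r _ => Submodule.smul_top_inf_eq_smul_of_rTensor_injective _ N (hpure _)

/-- Let `(A, m)` be a Noetherian local ring, `M` an `A`-module and `N ⊆ M` a pure
submodule.  Then `mʳM ∩ N = mʳN` for every `r ≥ 1`: the `m`-adic topology on `N` is the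
subspace topology induced from the `m`-adic topology on `M`. -/
theorem smul_top_inf_eq_smul_of_pure
    {A : Type u} [CommRing A] [IsNoetherianRing A] [IsLocalRing A]
    {M : Type u} [AddCommGroup M] [Module A M] (N : Submodule A M)
    (hpure : ∀ (L : Type u) [AddCommGroup L] [Module A L],
      Function.Injective (LinearMap.rTensor L N.subtype)) :
    ∀ r : ℕ, 1 ≤ r →
      (IsLocalRing.maximalIdeal A ^ r • (⊤ : Submodule A M)) ⊓ N
        = IsLocalRing.maximalIdeal A ^ r • N :=
  smul_top_inf_eq_smul_of_pure_general N hpure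
end

section
/- Let (A, m) be a Noetherian local domain. Then the quotient of the countable product A-module ∏_{n=1}^∞ A by the submodule of sequences converging to 0 in the m-adic topology (i.e., sequences (a_n) such that for each i, a_n ∈ m^i for all sufficiently large n) is a flat A-module. -/
/-- The submodule of `∏_{n : ℕ} A` consisting of sequences converging to `0` in the
`m`-adic topology, where `m` is an ideal of `A`. -/
def nullSequences (A : Type u) [CommRing A] (m : Ideal A) : Submodule A (ℕ → A) where
  carrier := {a | ∀ i : ℕ, ∃ N : ℕ, ∀ n ≥ N, a n ∈ m ^ i}
  add_mem' := by
    intro a b ha hb i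
    obtain ⟨N₁, h₁⟩ := ha i
    obtain ⟨N₂, h₂⟩ := hb i
    exact ⟨max N₁ N₂, fun n hn =>
      add_mem (h₁ n (le_trans (le_max_left _ _) hn)) (h₂ n (le_trans (le_max_right _ _) hn))⟩
  zero_mem' := fun i => ⟨0, fun n _ => zero_mem _⟩
  smul_mem' := by
    intro c a ha i
    obtain ⟨N, h⟩ := ha i
    exact ⟨N, fun n hn => Ideal.mul_mem_left _ c (h n hn)⟩

/-!
Lift a relation `∑ fᵢ xᵢ = 0` in the quotient to sequences `pᵢ`. Then `z = ∑ fᵢ pᵢ` is null and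
takes values in `I = (f)`, so by Artin–Rees `zₙ ∈ m^{tₙ} I` with `tₙ → ∞`; writing
`zₙ = ∑ fᵢ cᵢₙ` with `cᵢₙ ∈ m^{tₙ}` and replacing `pᵢ` by `pᵢ - cᵢ` gives lifts satisfying the
relation on the nose in `∏ A`. There every relation is trivial, since coordinatewise the
vectors lie in the finitely generated syzygy module of `f`.
-/

open Filter

theorem Nat.exists_tendsto_atTop_forall {P : ℕ → ℕ → Prop} (h₀ : ∀ n, P n 0)
    (h : ∀ j, ∀ᶠ n in atTop, P n j) : ∃ t : ℕ → ℕ, Tendsto t atTop atTop ∧ ∀ n, P n (t n) := by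
  classical
  refine ⟨fun n => Nat.findGreatest (P n) n, tendsto_atTop.2 fun j => ?_,
    fun n => Nat.findGreatest_spec (Nat.zero_le n) (h₀ n)⟩
  filter_upwards [h j, eventually_ge_atTop j] with n hP hj
  exact Nat.le_findGreatest hj hP

theorem Module.IsTrivialRelation.map {R M N : Type*} [CommRing R] [AddCommGroup M] [Module R M]
    [AddCommGroup N] [Module R N] {ι : Type*} [Fintype ι] {f : ι → R} {x : ι → M}
    (h : Module.IsTrivialRelation f x) (g : M →ₗ[R] N) : Module.IsTrivialRelation f (g ∘ x) := by
  obtain ⟨k, a, y, hxy, ha⟩ := h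
  exact ⟨k, a, g ∘ y, fun i => by simp [hxy i], ha⟩

section

variable {A : Type*} [CommRing A] {ι : Type*} [Fintype ι]

/-- **Artin–Rees lemma** for ideals. -/
theorem Ideal.exists_pow_add_inf_le_pow_mul [IsNoetherianRing A] (m I : Ideal A) :
    ∃ k, ∀ j, m ^ (j + k) ⊓ I ≤ m ^ j * I := by
  obtain ⟨k, hk⟩ := Ideal.exists_pow_inf_eq_pow_smul m I
  refine ⟨k, fun j => ?_⟩
  have := hk (j + k) (Nat.le_add_left k j)
  simp only [Ideal.smul_eq_mul, Ideal.mul_top, Nat.add_sub_cancel] at this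
  exact this.le.trans (Ideal.mul_mono_right inf_le_right)

theorem Ideal.exists_forall_mem_and_eq_sum_mul (f : ι → A) {J : Ideal A} {a : A}
    (ha : a ∈ J * Ideal.span (Set.range f)) :
    ∃ c : ι → A, (∀ i, c i ∈ J) ∧ a = ∑ i, f i * c i := by
  refine Submodule.mul_induction_on ha ?_ ?_
  · intro r hr s hs
    obtain ⟨d, rfl⟩ := (Submodule.mem_span_range_iff_exists_fun A).mp hs
    refine ⟨fun i => r * d i, fun i => Ideal.mul_mem_right _ _ hr, ?_⟩
    simp only [smul_eq_mul, Finset.mul_sum]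
    exact Finset.sum_congr rfl fun i _ => by ring
  · rintro x y ⟨c, hc, rfl⟩ ⟨c', hc', rfl⟩
    exact ⟨c + c', fun i => add_mem (hc i) (hc' i), by simp [mul_add, Finset.sum_add_distrib]⟩

theorem mem_nullSequences_iff {m : Ideal A} {a : ℕ → A} :
    a ∈ nullSequences A m ↔ ∀ i, ∀ᶠ n in atTop, a n ∈ m ^ i := by
  simp only [eventually_atTop]
  rfl

theorem mem_nullSequences_of_mem_pow {m : Ideal A} {a : ℕ → A} {t : ℕ → ℕ}
    (ht : Tendsto t atTop atTop) (ha : ∀ n, a n ∈ m ^ t n) : a ∈ nullSequences A m :=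
  mem_nullSequences_iff.2 fun i =>
    (ht.eventually_ge_atTop i).mono fun n hn => Ideal.pow_le_pow_right hn (ha n)

variable [IsNoetherianRing A]

theorem eventually_mem_pow_mul_of_mem_nullSequences {m I : Ideal A} {z : ℕ → A}
    (hz : z ∈ nullSequences A m) (hzI : ∀ n, z n ∈ I) (j : ℕ) :
    ∀ᶠ n in atTop, z n ∈ m ^ j * I := by
  obtain ⟨k, hk⟩ := Ideal.exists_pow_add_inf_le_pow_mul m I
  filter_upwards [mem_nullSequences_iff.1 hz (j + k)] with n hn
  exact hk j ⟨hn, hzI n⟩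

theorem exists_nullSequences_eq_sum_smul (m : Ideal A) (f : ι → A) {z : ℕ → A}
    (hz : z ∈ nullSequences A m) (hzf : ∀ n, z n ∈ Ideal.span (Set.range f)) :
    ∃ c : ι → ℕ → A, (∀ i, c i ∈ nullSequences A m) ∧ z = ∑ i, f i • c i := by
  obtain ⟨t, ht, hzt⟩ := Nat.exists_tendsto_atTop_forall (P := fun n j => z n ∈ m ^ j * _)
    (by simpa using hzf) (eventually_mem_pow_mul_of_mem_nullSequences hz hzf)
  choose c hcm hcz using fun n => Ideal.exists_forall_mem_and_eq_sum_mul f (hzt n)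
  refine ⟨fun i n => c n i, fun i => mem_nullSequences_of_mem_pow ht fun n => hcm n i, ?_⟩
  ext n
  simp [hcz n]

theorem exists_lift_sum_smul_eq_zero (m : Ideal A) {f : ι → A}
    {x : ι → (ℕ → A) ⧸ nullSequences A m} (hfx : ∑ i, f i • x i = 0) :
    ∃ q : ι → ℕ → A, (∀ i, Submodule.Quotient.mk (q i) = x i) ∧ ∑ i, f i • q i = 0 := by
  choose p hp using fun i => Submodule.Quotient.mk_surjective _ (x i)
  have hz : ∑ i, f i • p i ∈ nullSequences A m := by
    rw [← Submodule.Quotient.mk_eq_zero, ← hfx, ← Submodule.mkQ_apply, map_sum]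
    simp only [map_smul, Submodule.mkQ_apply, hp]
  have hzf : ∀ n, (∑ i, f i • p i) n ∈ Ideal.span (Set.range f) := fun n => by
    simpa using Ideal.sum_mem _ fun i _ => Ideal.mul_mem_right _ _ (Ideal.subset_span (Set.mem_range_self i))
  obtain ⟨c, hc, hzc⟩ := exists_nullSequences_eq_sum_smul m f hz hzf
  refine ⟨p - c, fun i => ?_, ?_⟩
  · simp [hp, (Submodule.Quotient.mk_eq_zero _).2 (hc i)]
  · simp [smul_sub, hzc]

theorem isTrivialRelation_of_sum_smul_eq_zero_pi {κ : Type*} {f : ι → A} {q : ι → κ → A}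
    (hfq : ∑ i, f i • q i = 0) : Module.IsTrivialRelation f q := by
  obtain ⟨s, g, hg⟩ := Submodule.fg_iff_exists_fin_generating_family.mp
    (IsNoetherian.noetherian (LinearMap.ker (Fintype.linearCombination A f)))
  have hqk : ∀ k, (fun i => q i k) ∈ Submodule.span A (Set.range g) := fun k => by
    rw [hg, LinearMap.mem_ker, Fintype.linearCombination_apply]
    simpa [mul_comm] using congrFun hfq k
  choose d hd using fun k => (Submodule.mem_span_range_iff_exists_fun A).mp (hqk k)
  refine ⟨s, fun i j => g j i, fun j k => d k j, fun i => ?_, fun j => ?_⟩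
  · ext k
    simpa [mul_comm] using (congrFun (hd k) i).symm
  · have := LinearMap.mem_ker.mp (hg ▸ Submodule.subset_span (Set.mem_range_self j))
    simpa [Fintype.linearCombination_apply, mul_comm] using this

theorem flat_quotient_nullSequences (m : Ideal A) :
    Module.Flat A ((ℕ → A) ⧸ nullSequences A m) := by
  refine Module.Flat.of_forall_isTrivialRelation fun {_ f x} hfx => ?_
  obtain ⟨q, hq, hfq⟩ := exists_lift_sum_smul_eq_zero m hfx
  obtain rfl : (nullSequences A m).mkQ ∘ q = x := funext hq
  exact (isTrivialRelation_of_sum_smul_eq_zero_pi hfq).map _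

end

theorem flat_product_quotient_nullSequences_general
    (A : Type u) [CommRing A] [IsNoetherianRing A] [IsLocalRing A] :
    Module.Flat A ((ℕ → A) ⧸ nullSequences A (IsLocalRing.maximalIdeal A)) :=
  flat_quotient_nullSequences _

/-- Let `(A, m)` be a Noetherian local domain.  The quotient of the countable product
`∏_{n : ℕ} A` by the submodule of sequences converging to `0` in the `m`-adic topology is a
flat `A`-module. -/
theorem flat_product_quotient_nullSequences
    (A : Type u) [CommRing A] [IsDomain A] [IsNoetherianRing A] [IsLocalRing A] :
    Module.Flat A ((ℕ → A) ⧸ nullSequences A (IsLocalRing.maximalIdeal A)) :=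
  flat_product_quotient_nullSequences_general A
end
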